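/- arXiv:2406.02352 — 2 statements merged into one kernel-verified Lean document; each statement's English description precedes it below -/
import Mathlib

section
/- Every feasible schedule is contained in a feasible schedule of length at least ⌈N_max/2⌉: let Δt > 0, t_0 ≤ t_max, N_max = ⌊(t_max − t_0)/Δt⌋ with N_max ≥ 1, and let s ⊆ ℝ be a feasible schedule. Then there exists a feasible schedule t with s ⊆ t and ⌈N_max/2⌉ ≤ |t| ≤ N_max. -/
/-- A finite set `s ⊆ ℝ` is a feasible schedule (w.r.t. start time `t₀`, horizon
`t_max`, and minimum delay `Δt`) if every element `x` of `s` satisfies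
`t₀ + Δt ≤ x ≤ t_max` and any two distinct elements of `s` differ by at least `Δt`. -/
def FeasibleSchedule (t₀ tmax Δt : ℝ) (s : Finset ℝ) : Prop :=
  (∀ x ∈ s, t₀ + Δt ≤ x ∧ x ≤ tmax) ∧
    ∀ x ∈ s, ∀ y ∈ s, x ≠ y → Δt ≤ |x - y|

/-!
Write `N = ⌊(t_max - t₀)/Δt⌋`. The map `x ↦ ⌊(x - t₀)/Δt⌋` sends a feasible schedule injectively
into `{1, …, N}`, so feasible schedules have at most `N` elements, and `s` therefore extends to a
feasible schedule `t` to which no point can be added. By that maximality every grid point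
`t₀ + iΔt`, `1 ≤ i ≤ N`, lies at distance `< Δt` from some element of `t`, while each element of
`t` is that close to at most two grid points; double counting gives `N ≤ 2|t|`.
-/

theorem Finset.exists_superset_forall_insert_mem {α : Type*} [DecidableEq α]
    {P : Finset α → Prop} {n : ℕ} (hP : ∀ t, P t → t.card ≤ n) {s : Finset α} (hs : P s) :
    ∃ t, s ⊆ t ∧ P t ∧ ∀ x, P (insert x t) → x ∈ t := by
  refine Finset.strongDownwardInduction (p := fun s => P s → ∃ t, s ⊆ t ∧ P t ∧
    ∀ x, P (insert x t) → x ∈ t) (fun s ih _ hs => ?_) s (hP s hs) hs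
  by_cases hmax : ∀ x, P (insert x s) → x ∈ s
  · exact ⟨s, subset_rfl, hs, hmax⟩
  push Not at hmax
  obtain ⟨x, hx, hxs⟩ := hmax
  obtain ⟨t, hst, ht⟩ := ih (hP _ hx) (Finset.ssubset_insert hxs) hx
  exact ⟨t, (Finset.subset_insert x s).trans hst, ht⟩

theorem Int.card_filter_abs_sub_lt_one_le_two (S : Finset ℤ) (c : ℝ) :
    (S.filter fun i : ℤ => |(i : ℝ) - c| < 1).card ≤ 2 := by
  calc (S.filter fun i : ℤ => |(i : ℝ) - c| < 1).card
      ≤ (Finset.Icc ⌊c⌋ (⌊c⌋ + 1)).card := by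
        refine Finset.card_le_card fun i hi => ?_
        obtain ⟨-, hi⟩ := Finset.mem_filter.mp hi
        rw [abs_sub_lt_iff] at hi
        have hlo : ⌊c⌋ < i + 1 := Int.floor_lt.mpr (by push_cast; linarith)
        have hhi : i < ⌊c⌋ + 2 := by
          have := Int.lt_floor_add_one c
          exact_mod_cast (show (i : ℝ) < ⌊c⌋ + 2 by linarith)
        exact Finset.mem_Icc.mpr ⟨by omega, by omega⟩
    _ = 2 := by rw [Int.card_Icc]; omega

namespace FeasibleSchedule

variable {t₀ tmax Δt : ℝ} {s : Finset ℝ}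

theorem floor_mem_Icc (hΔt : 0 < Δt) (hs : FeasibleSchedule t₀ tmax Δt s) {x : ℝ} (hx : x ∈ s) :
    ⌊(x - t₀) / Δt⌋ ∈ Finset.Icc 1 ⌊(tmax - t₀) / Δt⌋ := by
  obtain ⟨hlo, hhi⟩ := hs.1 x hx
  refine Finset.mem_Icc.mpr ⟨Int.le_floor.mpr ?_, Int.floor_mono ?_⟩
  · rw [Int.cast_one, le_div_iff₀ hΔt]; linarith
  · gcongr

theorem card_le_toNat_floor (hΔt : 0 < Δt) (hs : FeasibleSchedule t₀ tmax Δt s) :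
    s.card ≤ ⌊(tmax - t₀) / Δt⌋.toNat := by
  have hinj : Set.InjOn (fun x => ⌊(x - t₀) / Δt⌋) s := by
    intro x hx y hy hxy
    by_contra hne
    have hclose := Int.abs_sub_lt_one_of_floor_eq_floor hxy
    rw [← sub_div, sub_sub_sub_cancel_right, abs_div, abs_of_pos hΔt, div_lt_one hΔt] at hclose
    exact (hs.2 x hx y hy hne).not_gt hclose
  simpa using Finset.card_le_card_of_injOn _ (fun x hx => hs.floor_mem_Icc hΔt hx) hinj

theorem insert_of_forall_le_abs_sub (hs : FeasibleSchedule t₀ tmax Δt s) {x : ℝ}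
    (hlo : t₀ + Δt ≤ x) (hhi : x ≤ tmax) (hsep : ∀ y ∈ s, Δt ≤ |x - y|) :
    FeasibleSchedule t₀ tmax Δt (insert x s) := by
  refine ⟨fun y hy => ?_, fun y hy z hz hyz => ?_⟩
  · rcases Finset.mem_insert.mp hy with rfl | hy
    exacts [⟨hlo, hhi⟩, hs.1 y hy]
  · rcases Finset.mem_insert.mp hy with rfl | hys <;>
      rcases Finset.mem_insert.mp hz with rfl | hzs
    · exact absurd rfl hyz
    · exact hsep z hzs
    · rw [abs_sub_comm]; exact hsep y hys
    · exact hs.2 y hys z hzs hyz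

theorem exists_near_grid_point (hΔt : 0 < Δt) (hs : FeasibleSchedule t₀ tmax Δt s)
    (hmax : ∀ x, FeasibleSchedule t₀ tmax Δt (insert x s) → x ∈ s)
    {i : ℤ} (hi : i ∈ Finset.Icc 1 ⌊(tmax - t₀) / Δt⌋) :
    ∃ y ∈ s, |(i : ℝ) - (y - t₀) / Δt| < 1 := by
  have hdist (y : ℝ) : |t₀ + i * Δt - y| = Δt * |(i : ℝ) - (y - t₀) / Δt| := by
    have : t₀ + i * Δt - y = Δt * ((i : ℝ) - (y - t₀) / Δt) := by field_simp; ring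
    rw [this, abs_mul, abs_of_pos hΔt]
  by_contra! hfar
  obtain ⟨hi₁, hiN⟩ := Finset.mem_Icc.mp hi
  have hlo : t₀ + Δt ≤ t₀ + i * Δt := by
    have : (1 : ℝ) ≤ i := by exact_mod_cast hi₁
    nlinarith
  have hhi : t₀ + i * Δt ≤ tmax := by
    have := (Int.le_floor.mp hiN)
    rw [le_div_iff₀ hΔt] at this
    linarith
  have hmem := hmax _ (hs.insert_of_forall_le_abs_sub hlo hhi fun y hy => by
    rw [hdist]; nlinarith [hfar y hy])
  have := hfar _ hmem
  rw [add_sub_cancel_left, mul_div_cancel_right₀ _ hΔt.ne', sub_self, abs_zero] at this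
  linarith

theorem toNat_floor_le_two_mul_card (hΔt : 0 < Δt) (hs : FeasibleSchedule t₀ tmax Δt s)
    (hmax : ∀ x, FeasibleSchedule t₀ tmax Δt (insert x s) → x ∈ s) :
    ⌊(tmax - t₀) / Δt⌋.toNat ≤ 2 * s.card := by
  have hcount := Finset.card_mul_le_card_mul (fun (i : ℤ) y => |(i : ℝ) - (y - t₀) / Δt| < 1)
    (m := 1) (n := 2) (s := Finset.Icc 1 ⌊(tmax - t₀) / Δt⌋) (t := s)
    (fun i hi => Finset.one_le_card.mpr <| by
      simpa [Finset.bipartiteAbove, Finset.filter_nonempty_iff] using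
        hs.exists_near_grid_point hΔt hmax hi)
    (fun y _ => Int.card_filter_abs_sub_lt_one_le_two _ _)
  simp only [Int.card_Icc, add_sub_cancel_right, mul_one] at hcount
  omega

end FeasibleSchedule

theorem feasibleSchedule_extend_to_half_Nmax_general (t₀ tmax Δt : ℝ)
    (hΔt : 0 < Δt) (h₀ : t₀ ≤ tmax)
    (s : Finset ℝ) (hs : FeasibleSchedule t₀ tmax Δt s) :
    ∃ t : Finset ℝ, FeasibleSchedule t₀ tmax Δt t ∧ s ⊆ t ∧
      ⌈(⌊(tmax - t₀) / Δt⌋ : ℚ) / 2⌉ ≤ (t.card : ℤ) ∧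
      (t.card : ℤ) ≤ ⌊(tmax - t₀) / Δt⌋ := by
  obtain ⟨t, hst, ht, hmax⟩ :=
    Finset.exists_superset_forall_insert_mem (fun _ ht => ht.card_le_toNat_floor hΔt) hs
  have hN : 0 ≤ ⌊(tmax - t₀) / Δt⌋ := Int.floor_nonneg.mpr (div_nonneg (by linarith) hΔt.le)
  have hupper := ht.card_le_toNat_floor hΔt
  have hlower := ht.toNat_floor_le_two_mul_card hΔt hmax
  refine ⟨t, ht, hst, ?_, by omega⟩
  rw [Int.ceil_le, div_le_iff₀ two_pos]
  exact_mod_cast (by omega : ⌊(tmax - t₀) / Δt⌋ ≤ t.card * 2)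

/-- **Every feasible schedule is contained in a feasible schedule of length at least
`⌈N_max/2⌉`.** If `Δt > 0`, `t₀ ≤ t_max`, `N_max = ⌊(t_max − t₀)/Δt⌋ ≥ 1` and `s` is
a feasible schedule, then there is a feasible schedule `t ⊇ s` with
`⌈N_max/2⌉ ≤ |t| ≤ N_max`. -/
theorem feasibleSchedule_extend_to_half_Nmax (t₀ tmax Δt : ℝ)
    (hΔt : 0 < Δt) (h₀ : t₀ ≤ tmax)
    (hN : 1 ≤ ⌊(tmax - t₀) / Δt⌋)
    (s : Finset ℝ) (hs : FeasibleSchedule t₀ tmax Δt s) :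
    ∃ t : Finset ℝ, FeasibleSchedule t₀ tmax Δt t ∧ s ⊆ t ∧
      ⌈(⌊(tmax - t₀) / Δt⌋ : ℚ) / 2⌉ ≤ (t.card : ℤ) ∧
      (t.card : ℤ) ≤ ⌊(tmax - t₀) / Δt⌋ :=
  feasibleSchedule_extend_to_half_Nmax_general t₀ tmax Δt hΔt h₀ s hs
end

section
/- (Search space reduction, Proposition 1.) Let Δt > 0, t_0 ≤ t_max, N_max = ⌊(t_max − t_0)/Δt⌋ with N_max ≥ 1, and let α : Finset ℝ → ℝ be monotone with respect to set inclusion (s ⊆ t implies α(s) ≤ α(t)). Then the supremum of α over all feasible schedules s with 1 ≤ |s| ≤ N_max equals the supremum of α over all feasible schedules s with ⌈N_max/2⌉ ≤ |s| ≤ N_max; that is, restricting the batch-size search space from {1, ..., N_max} to {⌈N_max/2⌉, ..., N_max} does not change the optimal acquisition value. -/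
/-!
Every feasible schedule `s` extends to a feasible schedule with at least `N_max / 2` elements.
Take a feasible `t ⊇ s` of maximal size. Each grid point `t₀ + i Δt`, `1 ≤ i ≤ N_max`, is
admissible, so by maximality it lies at distance `< Δt` from some point of `t`; but a point of `t`
is that close to at most two grid points, whence `N_max ≤ 2 |t|`. Since `α s ≤ α t`, each of the
two sets of values dominates the other, and their suprema agree.
-/

open Finset

lemma Int.mem_Icc_floor_of_abs_sub_lt_one {R : Type*} [Ring R] [LinearOrder R]
    [IsOrderedRing R] [FloorRing R] {c : R} {i : ℤ} (h : |(i : R) - c| < 1) :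
    i ∈ Icc ⌊c⌋ (⌊c⌋ + 1) := by
  obtain ⟨hlo, hhi⟩ := abs_sub_lt_iff.1 h
  refine mem_Icc.2 ⟨Int.floor_le_iff.2 (sub_lt_iff_lt_add'.1 hhi), ?_⟩
  have : i - 1 ≤ ⌊c⌋ := Int.le_floor.2 (by push_cast; exact (sub_lt_comm.1 hlo).le)
  omega

lemma card_le_two_mul_card_of_forall_exists_abs_sub_lt {t₀ Δt : ℝ} (hΔt : 0 < Δt)
    {I : Finset ℤ} {s : Finset ℝ} (h : ∀ i ∈ I, ∃ x ∈ s, |t₀ + i * Δt - x| < Δt) :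
    #I ≤ 2 * #s := by
  classical
  have hcover : I ⊆ s.biUnion fun x => Icc ⌊(x - t₀) / Δt⌋ (⌊(x - t₀) / Δt⌋ + 1) := by
    intro i hi
    obtain ⟨x, hx, hix⟩ := h i hi
    refine mem_biUnion.2 ⟨x, hx, Int.mem_Icc_floor_of_abs_sub_lt_one ?_⟩
    have : (i : ℝ) - (x - t₀) / Δt = (t₀ + i * Δt - x) / Δt := by field_simp; ring
    rwa [this, abs_div, abs_of_pos hΔt, div_lt_one hΔt]
  calc #I ≤ _ := card_le_card hcover
    _ ≤ #s * 2 := card_biUnion_le_card_mul _ _ _ fun x _ => by rw [Int.card_Icc]; omega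
    _ = 2 * #s := mul_comm _ _

lemma add_mul_mem_Icc_of_mem_Icc_floor {t₀ tmax Δt : ℝ} (hΔt : 0 < Δt) {i : ℤ}
    (hi : i ∈ Icc 1 ⌊(tmax - t₀) / Δt⌋) : t₀ + Δt ≤ t₀ + i * Δt ∧ t₀ + i * Δt ≤ tmax := by
  obtain ⟨hone, hle⟩ := mem_Icc.1 hi
  have hone : (1 : ℝ) ≤ i := by exact_mod_cast hone
  have hle : (i : ℝ) ≤ (tmax - t₀) / Δt := (Int.cast_le.2 hle).trans (Int.floor_le _)
  rw [le_div_iff₀ hΔt] at hle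
  constructor <;> nlinarith

namespace FeasibleSchedule

variable {t₀ tmax Δt : ℝ} {s : Finset ℝ}

lemma card_le (hΔt : 0 < Δt) (hs : FeasibleSchedule t₀ tmax Δt s) :
    #s ≤ ⌊(tmax - t₀) / Δt⌋.toNat := by
  have hmaps : ∀ x ∈ s, ⌊(x - t₀) / Δt⌋ ∈ Icc 1 ⌊(tmax - t₀) / Δt⌋ := by
    intro x hx
    obtain ⟨hlo, hhi⟩ := hs.1 x hx
    refine mem_Icc.2 ⟨Int.le_floor.2 ?_, Int.floor_le_floor (by gcongr)⟩
    rw [Int.cast_one, le_div_iff₀ hΔt]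
    linarith
  have hinj : Set.InjOn (fun x => ⌊(x - t₀) / Δt⌋) s := by
    intro x hx y hy hxy
    by_contra hne
    have hlt := Int.abs_sub_lt_one_of_floor_eq_floor hxy
    rw [← sub_div, sub_sub_sub_cancel_right, abs_div, abs_of_pos hΔt, div_lt_one hΔt] at hlt
    exact (hs.2 x hx y hy hne).not_gt hlt
  simpa using card_le_card_of_injOn _ hmaps hinj

protected lemma insert {x : ℝ} (hs : FeasibleSchedule t₀ tmax Δt s)
    (hx : t₀ + Δt ≤ x ∧ x ≤ tmax) (hfar : ∀ y ∈ s, Δt ≤ |x - y|) :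
    FeasibleSchedule t₀ tmax Δt (insert x s) := by
  refine ⟨forall_mem_insert _ _ _ |>.2 ⟨hx, hs.1⟩, ?_⟩
  simp only [mem_insert]
  rintro a (rfl | ha) b (rfl | hb) hab
  · exact absurd rfl hab
  · exact hfar b hb
  · rw [abs_sub_comm]
    exact hfar a ha
  · exact hs.2 a ha b hb hab

lemma exists_superset_le_two_mul_card (hΔt : 0 < Δt) (hs : FeasibleSchedule t₀ tmax Δt s) :
    ∃ t, s ⊆ t ∧ FeasibleSchedule t₀ tmax Δt t ∧ ⌊(tmax - t₀) / Δt⌋ ≤ 2 * (#t : ℤ) := by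
  classical
  set N := ⌊(tmax - t₀) / Δt⌋
  refine strongDownwardInductionOn (n := N.toNat)
    (p := fun s => FeasibleSchedule t₀ tmax Δt s →
      ∃ t, s ⊆ t ∧ FeasibleSchedule t₀ tmax Δt t ∧ N ≤ 2 * (#t : ℤ))
    s ?_ (hs.card_le hΔt) hs
  intro t ih _ ht
  by_cases hlarge : N ≤ 2 * (#t : ℤ)
  · exact ⟨t, subset_rfl, ht, hlarge⟩
  obtain ⟨i, hi, hfar⟩ : ∃ i ∈ Icc 1 N, ∀ x ∈ t, Δt ≤ |t₀ + i * Δt - x| := by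
    by_contra! hcover
    have := card_le_two_mul_card_of_forall_exists_abs_sub_lt hΔt hcover
    simp only [Int.card_Icc, add_sub_cancel_right] at this
    omega
  have hnew : t₀ + i * Δt ∉ t := fun hmem => by
    simpa [hΔt.not_ge] using hfar _ hmem
  have hins := ht.insert (add_mul_mem_Icc_of_mem_Icc_floor hΔt hi) hfar
  obtain ⟨u, htu, hu, hNu⟩ := ih (hins.card_le hΔt) (ssubset_insert hnew) hins
  exact ⟨u, (subset_insert _ _).trans htu, hu, hNu⟩

end FeasibleSchedule

theorem searchSpaceReduction_general (t₀ tmax Δt : ℝ) (hΔt : 0 < Δt)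
    (hN : 1 ≤ ⌊(tmax - t₀) / Δt⌋)
    (α : Finset ℝ → ℝ) (hα : ∀ s t : Finset ℝ, s ⊆ t → α s ≤ α t) :
    sSup {v : ℝ | ∃ s : Finset ℝ, FeasibleSchedule t₀ tmax Δt s ∧
        1 ≤ (s.card : ℤ) ∧ (s.card : ℤ) ≤ ⌊(tmax - t₀) / Δt⌋ ∧ α s = v} =
      sSup {v : ℝ | ∃ s : Finset ℝ, FeasibleSchedule t₀ tmax Δt s ∧
        ⌈(⌊(tmax - t₀) / Δt⌋ : ℚ) / 2⌉ ≤ (s.card : ℤ) ∧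
        (s.card : ℤ) ≤ ⌊(tmax - t₀) / Δt⌋ ∧ α s = v} := by
  set N := ⌊(tmax - t₀) / Δt⌋
  have half_le_iff (n : ℕ) : ⌈(N : ℚ) / 2⌉ ≤ (n : ℤ) ↔ N ≤ 2 * n := by
    rw [Int.ceil_le, div_le_iff₀ two_pos, mul_comm]
    norm_cast
  apply csSup_eq_csSup_of_forall_exists_le
  · rintro _ ⟨s, hs, -, -, rfl⟩
    obtain ⟨t, hst, ht, hNt⟩ := hs.exists_superset_le_two_mul_card hΔt
    have htN := ht.card_le hΔt
    exact ⟨α t, ⟨t, ht, (half_le_iff _).2 hNt, by omega, rfl⟩, hα s t hst⟩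
  · rintro _ ⟨s, hs, hhalf, hsN, rfl⟩
    have := (half_le_iff _).1 hhalf
    exact ⟨α s, ⟨s, hs, by omega, hsN, rfl⟩, le_rfl⟩

/-- **Search space reduction (Proposition 1).** For a batch acquisition function `α`
that is monotone with respect to set inclusion, the supremum of `α` over all feasible
schedules of size between `1` and `N_max = ⌊(t_max − t₀)/Δt⌋` equals the supremum of
`α` over all feasible schedules of size between `⌈N_max/2⌉` and `N_max`: restricting
the batch-size search space does not change the optimal acquisition value. -/
theorem searchSpaceReduction (t₀ tmax Δt : ℝ) (hΔt : 0 < Δt) (h₀ : t₀ ≤ tmax)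
    (hN : 1 ≤ ⌊(tmax - t₀) / Δt⌋)
    (α : Finset ℝ → ℝ) (hα : ∀ s t : Finset ℝ, s ⊆ t → α s ≤ α t) :
    sSup {v : ℝ | ∃ s : Finset ℝ, FeasibleSchedule t₀ tmax Δt s ∧
        1 ≤ (s.card : ℤ) ∧ (s.card : ℤ) ≤ ⌊(tmax - t₀) / Δt⌋ ∧ α s = v} =
      sSup {v : ℝ | ∃ s : Finset ℝ, FeasibleSchedule t₀ tmax Δt s ∧
        ⌈(⌊(tmax - t₀) / Δt⌋ : ℚ) / 2⌉ ≤ (s.card : ℤ) ∧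
        (s.card : ℤ) ≤ ⌊(tmax - t₀) / Δt⌋ ∧ α s = v} :=
  searchSpaceReduction_general t₀ tmax Δt hΔt hN α hα
end
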